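/- Abstract discrete Bakry–Emery lemma (Proposition 4.1): let φ:[0,∞)→[0,∞) be continuous and convex, continuously differentiable on (0,∞), let f:𝒦_h→(0,∞), and let λ, C_P > 0 with τλ < 1. Define the entropy production P(g) := 𝒯·(H^φ(g|m_h) − H^φ(πg|m_h)). Assume: (i) 0 ≤ P(π^n f) ≤ C_P·F(π^n f) for all n∈ℕ; (ii) F(π^{n+1} f) − F(π^n f) ≤ −τλ·F(π^n f) for all n∈ℕ; (iii) H^φ(π^n f|m_h) → 0 as n→∞. Then H^φ(π^n f|m_h) ≤ (C_P/λ)·F(f)·e^{−λ n τ} for all n∈ℕ. -/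

import Mathlib

open scoped BigOperators Classical RealInnerProductSpace
open Finset MeasureTheory

noncomputable section

/-- Points of the state space `ℝᵈ` with the Euclidean norm. -/
abbrev Pt (d : ℕ) : Type := EuclideanSpace ℝ (Fin d)

/-- The set `G` of moves `+_j`, `-_j`. -/
inductive Move (d : ℕ) : Type where
  | pos : Fin d → Move d
  | neg : Fin d → Move d
  deriving DecidableEq, Fintype

namespace Move

/-- The direction of a move. -/
def dir {d : ℕ} : Move d → Fin d
  | pos j => j
  | neg j => j

/-- Action of a move on `ℝᵈ`: `(±_j) x = x ± h eⱼ`. -/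
def act {d : ℕ} (h : ℝ) : Move d → Pt d → Pt d
  | pos j, x => x + EuclideanSpace.single j h
  | neg j, x => x - EuclideanSpace.single j h

end Move

/-- Action of a move in `G ∪ {e}` (`none` is the null move `e`). -/
def actO {d : ℕ} (h : ℝ) : Option (Move d) → Pt d → Pt d
  | none, x => x
  | some γ, x => γ.act h x

/-- The grid `𝒦_h` of cell centers, where `N = 2K/h`. -/
def grid (d : ℕ) (K h : ℝ) (N : ℕ) : Finset (Pt d) :=
  Finset.image
    (fun n : Fin d → Fin N =>
      (EuclideanSpace.equiv (Fin d) ℝ).symm fun j => -K + h * ((n j : ℕ) + 1) - h / 2)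
    Finset.univ

/-- The averaged potential `V^h`. -/
def Vh {d : ℕ} (h : ℝ) (V : Pt d → ℝ) (x : Pt d) : ℝ :=
  (1 / h ^ d) * ∫ s in {s : Pt d | ∀ j, s j ∈ Set.Icc (-(h / 2)) (h / 2)}, V (x + s)

/-- The one-dimensional averaged potential `V_j^h`. -/
def Vjh (h : ℝ) (W : ℝ → ℝ) (x : ℝ) : ℝ :=
  (1 / h) * ∫ s in Set.Icc (-(h / 2)) (h / 2), W (x + s)

/-- The transition rates `c(x, γ)`. -/
def rate (d : ℕ) (K h σ : ℝ) (N : ℕ) (V : Pt d → ℝ) (x : Pt d) (γ : Move d) : ℝ :=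
  if x ∈ grid d K h N ∧ γ.act h x ∈ grid d K h N then
    σ ^ 2 / h ^ 2 * Real.exp (-(Vh h V (γ.act h x) - Vh h V x) / (2 * σ ^ 2))
  else 0

/-- The generator `L_h`. -/
def gen (d : ℕ) (K h σ : ℝ) (N : ℕ) (V : Pt d → ℝ) (f : Pt d → ℝ) (i : Pt d) : ℝ :=
  ∑ γ : Move d, rate d K h σ N V i γ * (f (γ.act h i) - f i)

/-- The normalization constant `Z`. -/
def Znorm (d : ℕ) (K h σ : ℝ) (N : ℕ) (V : Pt d → ℝ) : ℝ :=
  ∑ k ∈ grid d K h N, Real.exp (-Vh h V k / σ ^ 2)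

/-- The invariant measure `m_h`. -/
def mh (d : ℕ) (K h σ : ℝ) (N : ℕ) (V : Pt d → ℝ) (i : Pt d) : ℝ :=
  Real.exp (-Vh h V i / σ ^ 2) / Znorm d K h σ N V

/-- `κ₊(i,j)`. -/
def kplus (d : ℕ) (K h σ : ℝ) (N : ℕ) (V : Pt d → ℝ) (i : Pt d) (j : Fin d) : ℝ :=
  rate d K h σ N V i (Move.pos j) - rate d K h σ N V ((Move.pos j).act h i) (Move.pos j)
    - ∑ γ ∈ Finset.univ.filter fun γ : Move d => γ.dir ≠ j,
        max (rate d K h σ N V ((Move.pos j).act h i) γ - rate d K h σ N V i γ) 0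

/-- `κ₋(i,j)`. -/
def kminus (d : ℕ) (K h σ : ℝ) (N : ℕ) (V : Pt d → ℝ) (i : Pt d) (j : Fin d) : ℝ :=
  rate d K h σ N V i (Move.neg j) - rate d K h σ N V ((Move.neg j).act h i) (Move.neg j)
    - ∑ γ ∈ Finset.univ.filter fun γ : Move d => γ.dir ≠ j,
        max (rate d K h σ N V ((Move.neg j).act h i) γ - rate d K h σ N V i γ) 0

/-- Assumption (A3). -/
def A3 (d : ℕ) (K h σ : ℝ) (N : ℕ) (V : Pt d → ℝ) : Prop :=
  (∀ j : Fin d, ∀ i ∈ grid d K h N, (Move.pos j).act h i ∈ grid d K h N →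
      0 < kplus d K h σ N V i j) ∧
  (∀ j : Fin d, ∀ i ∈ grid d K h N, (Move.neg j).act h i ∈ grid d K h N →
      0 < kminus d K h σ N V i j)

/-- `κ_φ = min {κ₊(i,j) + κ₋(i+heⱼ,j)}`. -/
def kappaPhi (d : ℕ) (K h σ : ℝ) (N : ℕ) (V : Pt d → ℝ) : ℝ :=
  sInf { r : ℝ | ∃ j : Fin d, ∃ i ∈ grid d K h N, (Move.pos j).act h i ∈ grid d K h N ∧
    r = kplus d K h σ N V i j + kminus d K h σ N V ((Move.pos j).act h i) j }

/-- The φ-entropy `H^φ(f | m_h)`. -/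
def entPhi (d : ℕ) (K h σ : ℝ) (N : ℕ) (V : Pt d → ℝ) (φ : ℝ → ℝ) (f : Pt d → ℝ) : ℝ :=
  ∑ i ∈ grid d K h N, φ (f i) * mh d K h σ N V i
    - φ (∑ i ∈ grid d K h N, f i * mh d K h σ N V i)

/-- The Dirichlet form `E(f,g)`. -/
def dirichlet (d : ℕ) (K h σ : ℝ) (N : ℕ) (V : Pt d → ℝ) (f g : Pt d → ℝ) : ℝ :=
  -∑ i ∈ grid d K h N, f i * gen d K h σ N V g i * mh d K h σ N V i

/-- Assumption (A1) on the entropy density `φ`. -/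
def A1 (φ : ℝ → ℝ) : Prop :=
  ContinuousOn φ (Set.Ici 0) ∧ (∀ x ∈ Set.Ici (0 : ℝ), 0 ≤ φ x) ∧
  ConvexOn ℝ (Set.Ici 0) φ ∧
  (∀ x ∈ Set.Ioi (0 : ℝ), DifferentiableAt ℝ φ x) ∧
  ContinuousOn (deriv φ) (Set.Ioi 0) ∧
  ConvexOn ℝ (Set.Ioi 0 ×ˢ Set.Ioi 0)
    (fun p : ℝ × ℝ => (deriv φ p.1 - deriv φ p.2) * (p.1 - p.2))

/-- φ is continuous, nonnegative and convex on `[0,∞)`, and C¹ on `(0,∞)`. -/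
def PhiRegular (φ : ℝ → ℝ) : Prop :=
  ContinuousOn φ (Set.Ici 0) ∧ (∀ x ∈ Set.Ici (0 : ℝ), 0 ≤ φ x) ∧
  ConvexOn ℝ (Set.Ici 0) φ ∧
  (∀ x ∈ Set.Ioi (0 : ℝ), DifferentiableAt ℝ φ x) ∧
  ContinuousOn (deriv φ) (Set.Ioi 0)

/-- `f^φ(x, y) = (φ'(f x) - φ'(f y)) (f x - f y)`. -/
def fphi {d : ℕ} (φ : ℝ → ℝ) (f : Pt d → ℝ) (x y : Pt d) : ℝ :=
  (deriv φ (f x) - deriv φ (f y)) * (f x - f y)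

/-- Coupling rates `𝐜(i, i+heⱼ, γ, γ̄)` for the neighboring pair `(i, i+heⱼ)`. -/
def crate (d : ℕ) (K h σ : ℝ) (N : ℕ) (V : Pt d → ℝ) (i : Pt d) (j : Fin d) :
    Option (Move d) → Option (Move d) → ℝ
  | some a, some b =>
      if a = b then min (rate d K h σ N V i a) (rate d K h σ N V ((Move.pos j).act h i) a)
      else if a = Move.pos j ∧ b.dir ≠ j then
        max (rate d K h σ N V ((Move.pos j).act h i) b - rate d K h σ N V i b) 0
      else if a.dir ≠ j ∧ b = Move.neg j then
        max (rate d K h σ N V i a - rate d K h σ N V ((Move.pos j).act h i) a) 0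
      else 0
  | some a, none => if a = Move.pos j then kplus d K h σ N V i j else 0
  | none, some b => if b = Move.neg j then kminus d K h σ N V ((Move.pos j).act h i) j else 0
  | none, none => 0

/-- Coupling rates `𝐜(i, δ i, γ, γ̄)` for an arbitrary move `δ ∈ G`. -/
def cpl (d : ℕ) (K h σ : ℝ) (N : ℕ) (V : Pt d → ℝ) (i : Pt d) (δ : Move d)
    (γ γb : Option (Move d)) : ℝ :=
  match δ with
  | Move.pos j => crate d K h σ N V i j γ γb
  | Move.neg j => crate d K h σ N V ((Move.neg j).act h i) j γb γ

/-- Synchronous coupling rates `𝐜(i, k, γ, γ̄)`. -/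
def syncRate (d : ℕ) (K h σ : ℝ) (N : ℕ) (V : Pt d → ℝ) (i k : Pt d) :
    Option (Move d) → Option (Move d) → ℝ
  | some a, some b => if a = b then min (rate d K h σ N V i a) (rate d K h σ N V k a) else 0
  | some a, none => max (rate d K h σ N V i a - rate d K h σ N V k a) 0
  | none, some b => max (rate d K h σ N V k b - rate d K h σ N V i b) 0
  | none, none => 0

/-- The graph (ℓ¹) distance. -/
def graphDist {d : ℕ} (x y : Pt d) : ℝ := ∑ j, |x j - y j|

/-- The generator matrix `Q`. -/
def Qmat (d : ℕ) (K h σ : ℝ) (N : ℕ) (V : Pt d → ℝ) :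
    Matrix {x // x ∈ grid d K h N} {x // x ∈ grid d K h N} ℝ := fun i k =>
  (∑ γ : Move d, if γ.act h i.1 = k.1 then rate d K h σ N V i.1 γ else 0)
    - (if i = k then ∑ γ : Move d, rate d K h σ N V i.1 γ else 0)

/-- The semigroup `S_t = e^{tQ}` acting on functions. -/
def St (d : ℕ) (K h σ : ℝ) (N : ℕ) (V : Pt d → ℝ) (t : ℝ) (f : Pt d → ℝ) (i : Pt d) : ℝ :=
  if hi : i ∈ grid d K h N then
    ∑ k : {x // x ∈ grid d K h N},
      NormedSpace.exp (t • Qmat d K h σ N V) ⟨i, hi⟩ k * f k.1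
  else 0

/-- The transition function `ν ↦ ν p_t` acting on measures. -/
def measPt (d : ℕ) (K h σ : ℝ) (N : ℕ) (V : Pt d → ℝ) (t : ℝ) (ν : Pt d → ℝ) (k : Pt d) : ℝ :=
  if hk : k ∈ grid d K h N then
    ∑ i : {x // x ∈ grid d K h N},
      ν i.1 * NormedSpace.exp (t • Qmat d K h σ N V) i ⟨k, hk⟩
  else 0

/-- `ν` is a probability measure on the grid. -/
def IsProbOn (d : ℕ) (K h : ℝ) (N : ℕ) (ν : Pt d → ℝ) : Prop :=
  (∀ x ∈ grid d K h N, 0 ≤ ν x) ∧ ∑ x ∈ grid d K h N, ν x = 1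

/-- Optimal transport cost between `ν` and `η` for the cost function `D`. -/
def Wgen (d : ℕ) (K h : ℝ) (N : ℕ) (D : Pt d → Pt d → ℝ) (ν η : Pt d → ℝ) : ℝ :=
  sInf { r : ℝ | ∃ γc : Pt d → Pt d → ℝ,
    (∀ x ∈ grid d K h N, ∀ y ∈ grid d K h N, 0 ≤ γc x y) ∧
    (∀ x ∈ grid d K h N, ∑ y ∈ grid d K h N, γc x y = ν x) ∧
    (∀ y ∈ grid d K h N, ∑ x ∈ grid d K h N, γc x y = η y) ∧
    r = ∑ x ∈ grid d K h N, ∑ y ∈ grid d K h N, D x y * γc x y }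

/-- The `L^p` Wasserstein distance w.r.t. the Euclidean distance. -/
def Wp (d : ℕ) (K h : ℝ) (N : ℕ) (p : ℝ) (ν η : Pt d → ℝ) : ℝ :=
  (Wgen d K h N (fun x y => ‖x - y‖ ^ p) ν η) ^ (1 / p)

/-- The `L¹` Wasserstein distance w.r.t. the Euclidean distance. -/
def W1 (d : ℕ) (K h : ℝ) (N : ℕ) (ν η : Pt d → ℝ) : ℝ :=
  Wgen d K h N (fun x y => ‖x - y‖) ν η

/-- The `L¹` Wasserstein distance w.r.t. the graph distance. -/
def Wd1 (d : ℕ) (K h : ℝ) (N : ℕ) (ν η : Pt d → ℝ) : ℝ :=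
  Wgen d K h N graphDist ν η

/-- The rescaling factor `𝒯 = 2 max_i Σ_γ c(i,γ)`. -/
def Tcal (d : ℕ) (K h σ : ℝ) (N : ℕ) (V : Pt d → ℝ) : ℝ :=
  2 * sSup ((fun i => ∑ γ : Move d, rate d K h σ N V i γ) '' (grid d K h N : Set (Pt d)))

/-- The time step `τ = 1/𝒯`. -/
def tauStep (d : ℕ) (K h σ : ℝ) (N : ℕ) (V : Pt d → ℝ) : ℝ :=
  1 / Tcal d K h σ N V

/-- The rescaled jump rates `p(i,γ) = c(i,γ)/𝒯`. -/
def prate (d : ℕ) (K h σ : ℝ) (N : ℕ) (V : Pt d → ℝ) (i : Pt d) (γ : Move d) : ℝ :=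
  rate d K h σ N V i γ / Tcal d K h σ N V

/-- The transition matrix `π` acting on functions: `(π f)(i) = Σ_k π(i,k) f(k)`. -/
def piStep (d : ℕ) (K h σ : ℝ) (N : ℕ) (V : Pt d → ℝ) (f : Pt d → ℝ) (i : Pt d) : ℝ :=
  f i + ∑ γ : Move d, prate d K h σ N V i γ * (f (γ.act h i) - f i)

/-- The entries `π(i,k)` of the transition matrix. -/
def piKernel (d : ℕ) (K h σ : ℝ) (N : ℕ) (V : Pt d → ℝ) (i k : Pt d) : ℝ :=
  (∑ γ : Move d, if γ.act h i = k then prate d K h σ N V i γ else 0)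
    + (if i = k then 1 - ∑ γ : Move d, prate d K h σ N V i γ else 0)

/-- The transition matrix `π` acting on measures: `(ν π)(k) = Σ_i ν(i) π(i,k)`. -/
def piMeas (d : ℕ) (K h σ : ℝ) (N : ℕ) (V : Pt d → ℝ) (ν : Pt d → ℝ) (k : Pt d) : ℝ :=
  if k ∈ grid d K h N then ∑ i ∈ grid d K h N, ν i * piKernel d K h σ N V i k else 0

/-- The Fisher information `F(f)`. -/
def fisher (d : ℕ) (K h σ : ℝ) (N : ℕ) (V : Pt d → ℝ) (φ : ℝ → ℝ) (f : Pt d → ℝ) : ℝ :=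
  (1 / 2) * ∑ i ∈ grid d K h N, ∑ γ : Move d,
    prate d K h σ N V i γ * (deriv φ (f (γ.act h i)) - deriv φ (f i))
      * (f (γ.act h i) - f i) * mh d K h σ N V i

/-- The entropy densities `φ_α` (with `φ₁(x) = x log x - x + 1`). -/
def phiAlpha (α : ℝ) (x : ℝ) : ℝ :=
  if α = 1 then x * Real.log x - x + 1 else (α - 1)⁻¹ * (x ^ α - x) - x + 1

/-- Assumption (A2): strong `κ`-convexity of `V` on `[-K,K]^d`. -/
def A2 (d : ℕ) (K : ℝ) (V : Pt d → ℝ) (κ : ℝ) : Prop :=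
  ∀ x y : Pt d, (∀ j, |x j| ≤ K) → (∀ j, |y j| ≤ K) →
    κ * ‖x - y‖ ^ 2 ≤ ⟪x - y, gradient V x - gradient V y⟫

/-- `V` is additive with components `Vs j`. -/
def IsAdditive (d : ℕ) (V : Pt d → ℝ) (Vs : Fin d → ℝ → ℝ) : Prop :=
  ∀ x : Pt d, V x = ∑ j, Vs j (x j)

/-- `∇V` is Lipschitz continuous with constant `L` on `[-K,K]^d`. -/
def GradLip (d : ℕ) (K : ℝ) (V : Pt d → ℝ) (L : ℝ) : Prop :=
  ∀ x y : Pt d, (∀ j, |x j| ≤ K) → (∀ j, |y j| ≤ K) →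
    ‖gradient V x - gradient V y‖ ≤ L * ‖x - y‖

/-- The basic assumptions on the discretization parameters. -/
def Params (d : ℕ) (K h σ : ℝ) (N : ℕ) (V : Pt d → ℝ) : Prop :=
  1 ≤ d ∧ 0 < K ∧ 0 < h ∧ (N : ℝ) * h = 2 * K ∧ 0 < σ ∧ ContDiff ℝ 2 V

/-- The discrete-time coupling `𝐩` for the neighboring pair `(i, i+heⱼ)`. -/
def pcoup (d : ℕ) (K h σ : ℝ) (N : ℕ) (V : Pt d → ℝ) (i : Pt d) (j : Fin d)
    (q : Option (Move d) × Option (Move d)) : ℝ :=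
  if q = (none, none) then
    1 - ∑ q' ∈ Finset.univ.filter
          (fun q' : Option (Move d) × Option (Move d) => q' ≠ (none, none)),
        crate d K h σ N V i j q'.1 q'.2 / Tcal d K h σ N V
  else crate d K h σ N V i j q.1 q.2 / Tcal d K h σ N V

end

/-!
Hypothesis (ii) makes the Fisher information decay geometrically, `F(πⁿf) ≤ (1 - τλ)ⁿ F(f)`.
Since the entropy tends to zero, `H(πⁿf)` is the sum of the entropy productions from step `n`
on, each at most `τ C_P F(πᵐf)`; summing the geometric series gives `(C_P/λ) F(f) (1 - τλ)ⁿ`,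
and `1 - τλ ≤ e^{-τλ}`.
-/

open Filter Topology

theorem le_pow_mul_of_succ_le_mul {F : ℕ → ℝ} {r : ℝ} (hr : 0 ≤ r)
    (hF : ∀ n, F (n + 1) ≤ r * F n) (n : ℕ) : F n ≤ r ^ n * F 0 := by
  induction n with
  | zero => simp
  | succ k ih =>
    calc F (k + 1) ≤ r * F k := hF k
      _ ≤ r * (r ^ k * F 0) := mul_le_mul_of_nonneg_left ih hr
      _ = r ^ (k + 1) * F 0 := by ring

theorem le_geom_tail_of_tendsto_zero {H : ℕ → ℝ} {C r : ℝ} (hr0 : 0 ≤ r) (hr1 : r < 1)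
    (hH : Tendsto H atTop (𝓝 0)) (hstep : ∀ n, H n - H (n + 1) ≤ C * r ^ n) (n : ℕ) :
    H n ≤ C * r ^ n / (1 - r) := by
  have hr : 1 - r ≠ 0 := by linarith
  have partial_sums : ∀ m, H n - H (n + m) ≤ C * r ^ n * (1 - r ^ m) / (1 - r) := by
    intro m
    induction m with
    | zero => simp
    | succ k ih =>
      have hk : C * r ^ n * (1 - r ^ k) / (1 - r) + C * r ^ (n + k)
          = C * r ^ n * (1 - r ^ (k + 1)) / (1 - r) := by
        field_simp
        ring
      show H n - H (n + k + 1) ≤ _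
      linarith [hstep (n + k)]
  have hlim : Tendsto (fun m => H n - H (n + m)) atTop (𝓝 (H n - 0)) :=
    tendsto_const_nhds.sub (hH.comp (tendsto_add_atTop_nat n |>.congr fun m => add_comm m n))
  have hgeom : Tendsto (fun m => C * r ^ n * (1 - r ^ m) / (1 - r)) atTop
      (𝓝 (C * r ^ n * (1 - 0) / (1 - r))) :=
    ((tendsto_const_nhds.sub (tendsto_pow_atTop_nhds_zero_of_lt_one hr0 hr1)).const_mul _).div_const _
  simpa using le_of_tendsto_of_tendsto' hlim hgeom partial_sums

theorem abstract_bakry_emery {H F : ℕ → ℝ} {τ lam CP : ℝ} (hτ : 0 < τ) (hlam : 0 < lam)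
    (hCP : 0 ≤ CP) (htl : τ * lam ≤ 1)
    (hprod : ∀ n, H n - H (n + 1) ≤ τ * (CP * F n))
    (hfisher : ∀ n, F (n + 1) - F n ≤ -(τ * lam) * F n)
    (hH : Tendsto H atTop (𝓝 0)) (n : ℕ) :
    H n ≤ CP / lam * F 0 * (1 - τ * lam) ^ n := by
  have hdecay : ∀ m, F m ≤ (1 - τ * lam) ^ m * F 0 :=
    le_pow_mul_of_succ_le_mul (by linarith) fun m => by linarith [hfisher m]
  have hstep : ∀ m, H m - H (m + 1) ≤ τ * CP * F 0 * (1 - τ * lam) ^ m := fun m =>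
    calc H m - H (m + 1) ≤ τ * CP * F m := by linarith [hprod m]
      _ ≤ τ * CP * ((1 - τ * lam) ^ m * F 0) := by gcongr; exact hdecay m
      _ = τ * CP * F 0 * (1 - τ * lam) ^ m := by ring
  calc H n ≤ τ * CP * F 0 * (1 - τ * lam) ^ n / (1 - (1 - τ * lam)) :=
        le_geom_tail_of_tendsto_zero (by linarith) (by nlinarith) hH hstep n
    _ = CP / lam * F 0 * (1 - τ * lam) ^ n := by field_simp; ring

theorem rate_nonneg (d : ℕ) (K h σ : ℝ) (N : ℕ) (V : Pt d → ℝ) (x : Pt d) (γ : Move d) :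
    0 ≤ rate d K h σ N V x γ := by
  unfold rate
  split_ifs <;> positivity

theorem Tcal_nonneg (d : ℕ) (K h σ : ℝ) (N : ℕ) (V : Pt d → ℝ) : 0 ≤ Tcal d K h σ N V := by
  refine mul_nonneg zero_le_two (Real.sSup_nonneg ?_)
  rintro _ ⟨i, -, rfl⟩
  exact Finset.sum_nonneg fun γ _ => rate_nonneg d K h σ N V i γ

theorem piStep_eq_id_of_Tcal_eq_zero {d : ℕ} {K h σ : ℝ} {N : ℕ} {V : Pt d → ℝ}
    (hT : Tcal d K h σ N V = 0) : piStep d K h σ N V = id := by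
  funext g i
  simp [piStep, prate, hT]

theorem discrete_bakry_emery_general
    (d : ℕ) (K h σ : ℝ) (N : ℕ) (V : Pt d → ℝ)
    (φ : ℝ → ℝ)
    (f : Pt d → ℝ)
    (lam CP : ℝ) (hlam : 0 < lam) (hCP : 0 < CP)
    (htl : tauStep d K h σ N V * lam < 1)
    (hyp1 : ∀ n : ℕ,
      0 ≤ Tcal d K h σ N V *
          (entPhi d K h σ N V φ ((piStep d K h σ N V)^[n] f)
            - entPhi d K h σ N V φ ((piStep d K h σ N V)^[n + 1] f)) ∧
      Tcal d K h σ N V *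
          (entPhi d K h σ N V φ ((piStep d K h σ N V)^[n] f)
            - entPhi d K h σ N V φ ((piStep d K h σ N V)^[n + 1] f))
        ≤ CP * fisher d K h σ N V φ ((piStep d K h σ N V)^[n] f))
    (hyp2 : ∀ n : ℕ,
      fisher d K h σ N V φ ((piStep d K h σ N V)^[n + 1] f)
          - fisher d K h σ N V φ ((piStep d K h σ N V)^[n] f)
        ≤ -(tauStep d K h σ N V * lam) * fisher d K h σ N V φ ((piStep d K h σ N V)^[n] f))
    (hyp3 : Filter.Tendsto
      (fun n : ℕ => entPhi d K h σ N V φ ((piStep d K h σ N V)^[n] f))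
      Filter.atTop (nhds 0)) :
    ∀ n : ℕ,
      entPhi d K h σ N V φ ((piStep d K h σ N V)^[n] f)
        ≤ (CP / lam) * fisher d K h σ N V φ f
            * Real.exp (-lam * n * tauStep d K h σ N V) := by
  intro n
  set T := Tcal d K h σ N V
  set τ := tauStep d K h σ N V
  have hF0 : 0 ≤ fisher d K h σ N V φ f := by
    have := hyp1 0
    exact nonneg_of_mul_nonneg_right (by simpa using this.1.trans this.2) hCP
  rcases (Tcal_nonneg d K h σ N V).eq_or_lt with hT | hT
  · -- `𝒯 = 0` happens (e.g. on a one-point grid): then `π` is the identity and `H ≡ 0`.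
    have hconst : ∀ m, (piStep d K h σ N V)^[m] f = f := by
      simp [piStep_eq_id_of_Tcal_eq_zero hT.symm]
    simp only [hconst] at hyp3 ⊢
    rw [tendsto_nhds_unique tendsto_const_nhds hyp3]
    positivity
  · have hτ : 0 < τ := one_div_pos.mpr hT
    have hτT : τ * T = 1 := one_div_mul_cancel hT.ne'
    have hpow : (1 - τ * lam) ^ n ≤ Real.exp (-lam * n * τ) := by
      rw [show -lam * n * τ = n * -(τ * lam) by ring, Real.exp_nat_mul]
      exact pow_le_pow_left₀ (by linarith) (Real.one_sub_le_exp_neg _) n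
    refine (abstract_bakry_emery (F := fun m => fisher d K h σ N V φ ((piStep d K h σ N V)^[m] f))
      hτ hlam hCP.le htl.le (fun m => ?_) hyp2 hyp3 n).trans ?_
    · calc _ = τ * (T * (entPhi d K h σ N V φ ((piStep d K h σ N V)^[m] f)
            - entPhi d K h σ N V φ ((piStep d K h σ N V)^[m + 1] f))) := by
              rw [← mul_assoc, hτT, one_mul]
        _ ≤ _ := mul_le_mul_of_nonneg_left (hyp1 m).2 hτ.le
    · simpa only [Function.iterate_zero, id] using
        mul_le_mul_of_nonneg_left hpow (by positivity : 0 ≤ CP / lam * fisher d K h σ N V φ f)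

/-- Abstract discrete Bakry–Emery lemma (Proposition 4.1). -/
theorem discrete_bakry_emery
    (d : ℕ) (K h σ : ℝ) (N : ℕ) (V : Pt d → ℝ) (hp : Params d K h σ N V)
    (φ : ℝ → ℝ) (hφ : PhiRegular φ)
    (f : Pt d → ℝ) (hf : ∀ i ∈ grid d K h N, 0 < f i)
    (lam CP : ℝ) (hlam : 0 < lam) (hCP : 0 < CP)
    (htl : tauStep d K h σ N V * lam < 1)
    (hyp1 : ∀ n : ℕ,
      0 ≤ Tcal d K h σ N V *
          (entPhi d K h σ N V φ ((piStep d K h σ N V)^[n] f)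
            - entPhi d K h σ N V φ ((piStep d K h σ N V)^[n + 1] f)) ∧
      Tcal d K h σ N V *
          (entPhi d K h σ N V φ ((piStep d K h σ N V)^[n] f)
            - entPhi d K h σ N V φ ((piStep d K h σ N V)^[n + 1] f))
        ≤ CP * fisher d K h σ N V φ ((piStep d K h σ N V)^[n] f))
    (hyp2 : ∀ n : ℕ,
      fisher d K h σ N V φ ((piStep d K h σ N V)^[n + 1] f)
          - fisher d K h σ N V φ ((piStep d K h σ N V)^[n] f)
        ≤ -(tauStep d K h σ N V * lam) * fisher d K h σ N V φ ((piStep d K h σ N V)^[n] f))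
    (hyp3 : Filter.Tendsto
      (fun n : ℕ => entPhi d K h σ N V φ ((piStep d K h σ N V)^[n] f))
      Filter.atTop (nhds 0)) :
    ∀ n : ℕ,
      entPhi d K h σ N V φ ((piStep d K h σ N V)^[n] f)
        ≤ (CP / lam) * fisher d K h σ N V φ f
            * Real.exp (-lam * n * tauStep d K h σ N V) :=
  discrete_bakry_emery_general d K h σ N V φ f lam CP hlam hCP htl hyp1 hyp2 hyp3
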